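/- arXiv:1112.4813 — 2 statements merged into one kernel-verified Lean document; each statement's English description precedes it below -/
import Mathlib

section
/- (Routh's first expression / cevial triangle) Let A, B, C be non-collinear points in the plane and x,y,z real numbers with (1+x)(1+y)(1+z) ≠ 0. Let A_x on line BC satisfy vector(B,A_x)=x·vector(A_x,C), B_y on line CA satisfy vector(C,B_y)=y·vector(B_y,A), C_z on line AB satisfy vector(A,C_z)=z·vector(C_z,B). Then signedArea(A_x B_y C_z)/signedArea(ABC) = (xyz+1)/((1+x)(1+y)(1+z)). -/
/-!
Write each vertex of the cevial triangle as a point of a side line, e.g. `Ax = lineMap B C s` with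
`s = x / (1 + x)`. The signed area is affine in each vertex, so the area of the triangle cut out by
`lineMap B C s`, `lineMap C A t`, `lineMap A B u` is `(1 - s)(1 - t)(1 - u) + s t u` times that of
`ABC` (the determinant of the barycentric coordinates); with `1 - s = 1 / (1 + x)` this is Routh's
expression.
-/

noncomputable def signedArea (P Q R : ℝ × ℝ) : ℝ :=
  ((Q.1 - P.1) * (R.2 - P.2) - (R.1 - P.1) * (Q.2 - P.2)) / 2

def onLine (P A B : ℝ × ℝ) : Prop := P ∈ affineSpan ℝ ({A, B} : Set (ℝ × ℝ))

open AffineMap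

theorem mem_affineSpan_pair_of_signedArea_eq_zero {A B C : ℝ × ℝ} (hAB : A ≠ B)
    (h : signedArea A B C = 0) : C ∈ line[ℝ, A, B] := by
  have hcross : (B.1 - A.1) * (C.2 - A.2) = (C.1 - A.1) * (B.2 - A.2) := by
    unfold signedArea at h; linarith
  have hnorm : (B.1 - A.1) ^ 2 + (B.2 - A.2) ^ 2 ≠ 0 := by
    contrapose! hAB
    ext <;> nlinarith
  -- `C - A` equals its orthogonal projection onto `B - A`, the cross product being zero
  convert lineMap_mem_affineSpan_pair
    (((B.1 - A.1) * (C.1 - A.1) + (B.2 - A.2) * (C.2 - A.2)) /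
      ((B.1 - A.1) ^ 2 + (B.2 - A.2) ^ 2)) A B
  ext <;> simp only [lineMap_apply_module', Prod.fst_add, Prod.snd_add, Prod.smul_fst,
      Prod.smul_snd, smul_eq_mul, Prod.fst_sub, Prod.snd_sub] <;> field_simp
  · linear_combination -(B.2 - A.2) * hcross
  · linear_combination (B.1 - A.1) * hcross

theorem signedArea_ne_zero_of_not_collinear {A B C : ℝ × ℝ}
    (h : ¬ Collinear ℝ ({A, B, C} : Set (ℝ × ℝ))) : signedArea A B C ≠ 0 := by
  intro h0
  rcases eq_or_ne A B with rfl | hAB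
  · exact h (by simpa using collinear_pair ℝ A C)
  · rw [Set.pair_comm, Set.insert_comm] at h
    exact h <| collinear_insert_of_mem_affineSpan_pair <|
      mem_affineSpan_pair_of_signedArea_eq_zero hAB h0

theorem eq_lineMap_of_sub_eq_smul_sub {𝕜 V : Type*} [Field 𝕜] [AddCommGroup V] [Module 𝕜 V]
    {P B C : V} {x : 𝕜} (h : P - B = x • (C - P)) (hx : 1 + x ≠ 0) :
    P = lineMap B C (x / (1 + x)) := by
  rw [lineMap_apply_module]
  apply smul_right_injective V hx
  simp only [smul_add, smul_smul]
  field_simp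
  linear_combination (norm := module) h

theorem signedArea_lineMap (A B C : ℝ × ℝ) (s t u : ℝ) :
    signedArea (lineMap B C s) (lineMap C A t) (lineMap A B u) =
      ((1 - s) * (1 - t) * (1 - u) + s * t * u) * signedArea A B C := by
  simp only [signedArea, lineMap_apply_module, Prod.fst_add, Prod.snd_add, Prod.smul_fst,
    Prod.smul_snd, smul_eq_mul]
  ring

/-- Routh's first expression: the cevial triangle. -/
theorem cevial_triangle_area (A B C Ax By Cz : ℝ × ℝ) (x y z : ℝ)
    (hABC : ¬ Collinear ℝ ({A, B, C} : Set (ℝ × ℝ)))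
    (hden : (1 + x) * (1 + y) * (1 + z) ≠ 0)
    (hAx : Ax - B = x • (C - Ax))
    (hBy : By - C = y • (A - By))
    (hCz : Cz - A = z • (B - Cz)) :
    signedArea Ax By Cz / signedArea A B C =
      (x * y * z + 1) / ((1 + x) * (1 + y) * (1 + z)) := by
  have hx : 1 + x ≠ 0 := left_ne_zero_of_mul (left_ne_zero_of_mul hden)
  have hy : 1 + y ≠ 0 := right_ne_zero_of_mul (left_ne_zero_of_mul hden)
  have hz : 1 + z ≠ 0 := right_ne_zero_of_mul hden
  rw [eq_lineMap_of_sub_eq_smul_sub hAx hx, eq_lineMap_of_sub_eq_smul_sub hBy hy,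
    eq_lineMap_of_sub_eq_smul_sub hCz hz, signedArea_lineMap,
    mul_div_cancel_right₀ _ (signedArea_ne_zero_of_not_collinear hABC)]
  field_simp
  ring
end

section
/- In Routh's configuration with x=7, y=4, z=1, the Routh triangle PQR has area equal to 1/4 of the area of triangle ABC. -/
/-!
The point where the cevians through `A` and `B` meet has explicit barycentric coordinates:
comparing its two parametrisations against the affinely independent `A, B, C` gives
`(xy + x + 1) P = xy A + B + x C`, and `Q`, `R` follow by cyclic symmetry. The signed area of
three points in barycentric coordinates is the determinant of their coordinate matrix times the
signed area of `ABC`; here that determinant is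
`(xyz - 1)² / ((xy + x + 1)(yz + y + 1)(zx + z + 1))`, which is `27² / (36 · 9 · 9) = 1/4` for
`(x, y, z) = (7, 4, 1)`.
-/

section Cevians

variable {V : Type*} [AddCommGroup V] [Module ℝ V] {A B C D E P : V}

theorem eq_zero_of_not_collinear_of_smul_add_smul_add_smul_eq_zero
    (h : ¬ Collinear ℝ ({A, B, C} : Set V)) {a b c : ℝ} (hsum : a + b + c = 0)
    (hcomb : a • A + b • B + c • C = 0) : a = 0 ∧ b = 0 ∧ c = 0 := by
  have hind := affineIndependent_iff_not_collinear_set.mpr h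
  have := hind.eq_zero_of_sum_eq_zero (s := Finset.univ) (w := ![a, b, c])
    (by simpa [Fin.sum_univ_three] using hsum) (by simpa [Fin.sum_univ_three] using hcomb)
  exact ⟨this 0 (by simp), this 1 (by simp), this 2 (by simp)⟩

theorem exists_eq_lineMap_of_mem_affineSpan_pair (h : P ∈ line[ℝ, A, D]) :
    ∃ s : ℝ, P = (1 - s) • A + s • D := by
  obtain ⟨s, rfl⟩ := mem_affineSpan_pair_iff_exists_lineMap_eq.mp h
  exact ⟨s, AffineMap.lineMap_apply_module _ _ _⟩

theorem one_add_ne_zero_of_sub_eq_smul_sub (hBC : B ≠ C) {x : ℝ}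
    (hD : D - B = x • (C - D)) : 1 + x ≠ 0 := by
  intro hx
  obtain rfl : x = -1 := by linarith
  exact hBC (by linear_combination (norm := module) -hD)

theorem smul_eq_of_mem_cevians (h : ¬ Collinear ℝ ({A, B, C} : Set V)) {x y : ℝ}
    (hD : D - B = x • (C - D)) (hE : E - C = y • (A - E))
    (hPD : P ∈ line[ℝ, A, D]) (hPE : P ∈ line[ℝ, B, E]) :
    (x * y + x + 1) • P = (x * y) • A + B + x • C := by
  have hx := one_add_ne_zero_of_sub_eq_smul_sub (ne₂₃_of_not_collinear h) hD
  have hy := one_add_ne_zero_of_sub_eq_smul_sub (ne₁₃_of_not_collinear h).symm hE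
  obtain ⟨s, hs⟩ := exists_eq_lineMap_of_mem_affineSpan_pair hPD
  obtain ⟨t, ht⟩ := exists_eq_lineMap_of_mem_affineSpan_pair hPE
  obtain ⟨-, hB, hC⟩ := eq_zero_of_not_collinear_of_smul_add_smul_add_smul_eq_zero h
    (a := (1 - s) * (1 + x) * (1 + y) - t * (1 + x) * y)
    (b := s * (1 + y) - (1 - t) * (1 + x) * (1 + y)) (c := s * x * (1 + y) - t * (1 + x))
    (by ring)
    (by
      linear_combination (norm := module) ((1 + x) * (1 + y)) • (hs.symm.trans ht) -
        (s * (1 + y)) • hD + (t * (1 + x)) • hE)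
  have htw : t * (x * y + x + 1) = x * (1 + y) := by
    have : (1 + x) * (x * (1 + y) - t * (x * y + x + 1)) = 0 := by linear_combination hC - x * hB
    linarith [(mul_eq_zero.mp this).resolve_left hx]
  apply smul_right_injective V hy
  linear_combination (norm := module)
    ((1 + y) * (x * y + x + 1)) • ht + (t * (x * y + x + 1)) • hE + htw • (y • A - (1 + y) • B + C)

theorem mul_add_add_one_ne_zero_of_smul_eq (h : ¬ Collinear ℝ ({A, B, C} : Set V)) {x y : ℝ}
    (hP : (x * y + x + 1) • P = (x * y) • A + B + x • C) : x * y + x + 1 ≠ 0 := by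
  intro hw
  exact one_ne_zero (eq_zero_of_not_collinear_of_smul_add_smul_add_smul_eq_zero h (a := x * y)
    (b := 1) (c := x) (by linarith) (by rw [one_smul, ← hP, hw, zero_smul])).2.1

end Cevians

theorem signedArea_smul_add_smul_add_smul (A B C : ℝ × ℝ) {a₁ b₁ c₁ a₂ b₂ c₂ a₃ b₃ c₃ : ℝ}
    (h₁ : a₁ + b₁ + c₁ = 1) (h₂ : a₂ + b₂ + c₂ = 1) (h₃ : a₃ + b₃ + c₃ = 1) :
    signedArea (a₁ • A + b₁ • B + c₁ • C) (a₂ • A + b₂ • B + c₂ • C) (a₃ • A + b₃ • B + c₃ • C) =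
      !![a₁, b₁, c₁; a₂, b₂, c₂; a₃, b₃, c₃].det * signedArea A B C := by
  obtain rfl : a₁ = 1 - b₁ - c₁ := by linarith
  obtain rfl : a₂ = 1 - b₂ - c₂ := by linarith
  obtain rfl : a₃ = 1 - b₃ - c₃ := by linarith
  simp only [signedArea, Prod.fst_add, Prod.smul_fst, smul_eq_mul, Prod.snd_add, Prod.smul_snd,
    Matrix.det_fin_three, Matrix.of_apply, Matrix.cons_val', Matrix.cons_val_zero,
    Matrix.cons_val_fin_one, Matrix.cons_val_one, Matrix.cons_val]
  ring

theorem routh {A B C D E F P Q R : ℝ × ℝ} {x y z : ℝ}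
    (h : ¬ Collinear ℝ ({A, B, C} : Set (ℝ × ℝ)))
    (hD : D - B = x • (C - D)) (hE : E - C = y • (A - E)) (hF : F - A = z • (B - F))
    (hPD : onLine P A D) (hPE : onLine P B E) (hQE : onLine Q B E) (hQF : onLine Q C F)
    (hRF : onLine R C F) (hRD : onLine R A D) :
    signedArea P Q R =
      (x * y * z - 1) ^ 2 / ((x * y + x + 1) * (y * z + y + 1) * (z * x + z + 1)) *
        signedArea A B C := by
  have hBCA : ¬ Collinear ℝ ({B, C, A} : Set (ℝ × ℝ)) := by rwa [Set.pair_comm, Set.insert_comm]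
  have hCAB : ¬ Collinear ℝ ({C, A, B} : Set (ℝ × ℝ)) := by rwa [Set.insert_comm, Set.pair_comm]
  have hP := smul_eq_of_mem_cevians h hD hE hPD hPE
  have hQ := smul_eq_of_mem_cevians hBCA hE hF hQE hQF
  have hR := smul_eq_of_mem_cevians hCAB hF hD hRF hRD
  have hwP := mul_add_add_one_ne_zero_of_smul_eq h hP
  have hwQ := mul_add_add_one_ne_zero_of_smul_eq hBCA hQ
  have hwR := mul_add_add_one_ne_zero_of_smul_eq hCAB hR
  have hP' : P = (x * y / (x * y + x + 1)) • A + (1 / (x * y + x + 1)) • B +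
      (x / (x * y + x + 1)) • C := by
    rw [← inv_smul_smul₀ hwP P, hP]; module
  have hQ' : Q = (y / (y * z + y + 1)) • A + (y * z / (y * z + y + 1)) • B +
      (1 / (y * z + y + 1)) • C := by
    rw [← inv_smul_smul₀ hwQ Q, hQ]; module
  have hR' : R = (1 / (z * x + z + 1)) • A + (z / (z * x + z + 1)) • B +
      (z * x / (z * x + z + 1)) • C := by
    rw [← inv_smul_smul₀ hwR R, hR]; module
  rw [hP', hQ', hR', signedArea_smul_add_smul_add_smul A B C
    (by rw [← add_div, ← add_div, div_eq_one_iff_eq hwP]; ring)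
    (by rw [← add_div, ← add_div, div_eq_one_iff_eq hwQ]; ring)
    (by rw [← add_div, ← add_div, div_eq_one_iff_eq hwR]; ring),
    Matrix.det_fin_three]
  congr 1
  simp only [Matrix.of_apply, Matrix.cons_val', Matrix.cons_val_zero, Matrix.cons_val_fin_one,
    Matrix.cons_val_one, Matrix.cons_val]
  field_simp
  ring

/-- Routh's configuration with x=7, y=4, z=1. -/
theorem routh_7_4_1 (A B C Ax By Cz P Q R : ℝ × ℝ)
    (hABC : ¬ Collinear ℝ ({A, B, C} : Set (ℝ × ℝ)))
    (hAx : Ax - B = (7 : ℝ) • (C - Ax))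
    (hBy : By - C = (4 : ℝ) • (A - By))
    (hCz : Cz - A = (1 : ℝ) • (B - Cz))
    (hP1 : onLine P A Ax) (hP2 : onLine P B By)
    (hQ1 : onLine Q B By) (hQ2 : onLine Q C Cz)
    (hR1 : onLine R C Cz) (hR2 : onLine R A Ax) :
    |signedArea P Q R| = (1/4 : ℝ) * |signedArea A B C| := by
  rw [routh hABC hAx hBy hCz hP1 hP2 hQ1 hQ2 hR1 hR2, abs_mul]
  norm_num
end
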